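/- The nonstandard face subgroup G^{14}_N = ⟨⋃_{i∈α_{14}}( Ȳ_i ∪ ⋃_{j∈α_{23}} Z̄^j_{i,j} ∪ ⋃_{j∈α_1} Z̄^j_{i, j+|α_{1234}|} )⟩ of Ker(Φ), where |α_{1234}| = n + |α_1|, is isomorphic, as a group, to ∏_{i∈α_{14}} G_i (that is, to G_{α_1} × G_{α_4}). -/

import Mathlib

/-!
The map `a ↦ ∏ⱼ φ_i (s^j_i (a_j))` is a surjective endomorphism of the finitely generated abelian
group `L`, hence an automorphism; composing `φ_i` with its inverse gives `c_i : G_i → L` that kills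
`Y_i` and sends `s^j_i b` to `b` in slot `j`. Each label `j` has a partner coordinate `κ j` outside
`α₁₄`, and every generator `g` of the face subgroup is trivial outside `α₁₄ ∪ range κ` and has
`g (κ j) = s^j (-(∑_{i ∈ α₁₄} c_i (g_i))_j)`. These conditions cut out a subgroup, so they hold on
the whole face subgroup, on which the projection to the `α₁₄` coordinates is therefore injective.
It is onto because the generators project onto `Ȳ_i` and the sections of every factor.
-/

namespace SB

/-- `cc n p` is the 0-based boundary of the `p`-th label sequence:
`cc n p = ⌈p·n/3⌉` for `p ≤ 3`, and `cc n p = n + ⌈(p-3)·n/3⌉` for `p ≥ 3`. -/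
def cc (n p : ℕ) : ℕ := if p < 3 then (p * n + 2) / 3 else n + ((p - 3) * n + 2) / 3

/-- The 0-based label sequence `α_{p+1}` (paper's `α_1,…,α_6` for `p = 0,…,5`)
as a finite set of coordinates in `Fin (2n)`. -/
def alphaF (n p : ℕ) : Finset (Fin (2 * n)) :=
  Finset.univ.filter (fun x => cc n p ≤ x.val ∧ x.val < cc n (p + 1))

/-- The 0-based label sequence `α_{t+1}` (for `t < 3`) as a finite set of
indices in `Fin n` (indexing the factors `A_j`). -/
def alphaN (n t : ℕ) : Finset (Fin n) :=
  Finset.univ.filter (fun x => cc n t ≤ x.val ∧ x.val < cc n (t + 1))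

/-- Reduction of a natural number modulo `2n`, as an element of `Fin (2n)`. -/
def idx {n : ℕ} (hn : 0 < n) (k : ℕ) : Fin (2 * n) := ⟨k % (2 * n), Nat.mod_lt _ (by omega)⟩

/-- Reduction of a natural number modulo `n`, as an element of `Fin n`
(this implements the paper's `j*`). -/
def idxN {n : ℕ} (hn : 0 < n) (k : ℕ) : Fin n := ⟨k % n, Nat.mod_lt _ hn⟩

/-- The set `Ȳ_i` of vectorized kernel generators: `y ∈ Y i` placed in
coordinate `i` with identity elsewhere. -/
def Ybar {n : ℕ} {G : Fin (2 * n) → Type} [∀ i, Group (G i)]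
    (Y : ∀ i, Set (G i)) (i : Fin (2 * n)) : Set (∀ i', G i') :=
  Pi.mulSingle i '' (Y i)

/-- The set `Z̄^j_{i,k}` of vectorized section generators: for `b ∈ A j`, the
element with `s j i b` in coordinate `i`, `s j k b⁻¹` in coordinate `k`, and
identity elsewhere. -/
def Zbar {n : ℕ} {A : Fin n → Type} [∀ j, CommGroup (A j)]
    {G : Fin (2 * n) → Type} [∀ i, Group (G i)]
    (s : ∀ (j : Fin n) (i : Fin (2 * n)), A j →* G i)
    (j : Fin n) (i k : Fin (2 * n)) : Set (∀ i', G i') :=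
  Set.range (fun b : A j => Pi.mulSingle i (s j i b) * Pi.mulSingle k (s j k b⁻¹))

end SB

open Function Subgroup

theorem MonoidHom.injective_of_surjective_of_moduleFinite {B : Type*} [CommGroup B]
    [Module.Finite ℤ (Additive B)] {f : B →* B} (hf : Surjective f) : Injective f :=
  OrzechProperty.injective_of_surjective_endomorphism (MonoidHom.toAdditive f).toIntLinearMap hf

section PiHom

variable {ι : Type*}

def MonoidHom.piCoprod [Fintype ι] {N : ι → Type*} [∀ i, Monoid (N i)] {M : Type*}
    [CommMonoid M] (φ : ∀ i, N i →* M) : (∀ i, N i) →* M :=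
  noncommPiCoprod φ fun _ _ _ _ _ => Commute.all _ _

theorem MonoidHom.piCoprod_mulSingle [Fintype ι] [DecidableEq ι] {N : ι → Type*}
    [∀ i, Monoid (N i)] {M : Type*} [CommMonoid M] (φ : ∀ i, N i →* M) (i : ι) (x : N i) :
    piCoprod φ (Pi.mulSingle i x) = φ i x :=
  noncommPiCoprod_mulSingle _ _ _

def MonoidHom.piRestrict (G : ι → Type*) [∀ i, MulOneClass (G i)] (I : Finset ι) :
    (∀ k, G k) →* ∀ i : I, G i.1 :=
  MonoidHom.pi fun i => Pi.evalMonoidHom G i.1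

variable [DecidableEq ι] {G : ι → Type*} [∀ i, MulOneClass (G i)] {I : Finset ι}

theorem MonoidHom.piRestrict_mulSingle_of_mem {i : ι} (hi : i ∈ I) (x : G i) :
    piRestrict G I (Pi.mulSingle i x) = Pi.mulSingle ⟨i, hi⟩ x := by
  ext k
  by_cases hk : k = ⟨i, hi⟩
  · subst hk
    simp [piRestrict]
  · simp [piRestrict, Pi.mulSingle_eq_of_ne hk, Pi.mulSingle_eq_of_ne (Subtype.coe_ne_coe.2 hk)]

theorem MonoidHom.piRestrict_mulSingle_of_notMem {k : ι} (hk : k ∉ I) (x : G k) :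
    piRestrict G I (Pi.mulSingle k x) = 1 := by
  ext i
  simp [piRestrict, Pi.mulSingle_eq_of_ne (fun h : i.1 = k => hk (h ▸ i.2))]

end PiHom

theorem exists_monoidHom_eq_one_and_map_eq_mulSingle {J H : Type*} [Fintype J] [DecidableEq J]
    {A : J → Type*} [∀ j, CommGroup (A j)] [∀ j, Module.Finite ℤ (Additive (A j))] [Group H]
    {φ : H →* ∀ j, A j} (hφ : Surjective φ) (s : ∀ j, A j →* H) {Y : Set H}
    (hY : ∀ y ∈ Y, φ y = 1) (hgen : closure (Y ∪ ⋃ j, Set.range (s j)) = ⊤) :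
    ∃ c : H →* ∀ j, A j, (∀ y ∈ Y, c y = 1) ∧ ∀ j b, c (s j b) = Pi.mulSingle j b := by
  have : Module.Finite ℤ (Additive (∀ j, A j)) :=
    Module.Finite.equiv (AddEquiv.piAdditive A).symm.toIntLinearEquiv
  let M : (∀ j, A j) →* ∀ j, A j := MonoidHom.piCoprod fun j => φ.comp (s j)
  have hM (j : J) (b : A j) : M (Pi.mulSingle j b) = φ (s j b) :=
    MonoidHom.piCoprod_mulSingle _ j b
  have hMsurj : Surjective M := by
    have hle : closure (Y ∪ ⋃ j, Set.range (s j)) ≤ M.range.comap φ := by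
      rw [closure_le]
      rintro g (hg | hg)
      · exact ⟨1, by rw [map_one, hY g hg]⟩
      · obtain ⟨j, b, rfl⟩ := Set.mem_iUnion.1 hg
        exact ⟨_, hM j b⟩
    intro x
    obtain ⟨g, rfl⟩ := hφ x
    exact hle (hgen ▸ mem_top g)
  let e := MulEquiv.ofBijective M ⟨M.injective_of_surjective_of_moduleFinite hMsurj, hMsurj⟩
  refine ⟨e.symm.toMonoidHom.comp φ, fun y hy => ?_, fun j b => ?_⟩
  · simp [hY y hy]
  · rw [MonoidHom.comp_apply, MulEquiv.coe_toMonoidHom, MulEquiv.symm_apply_eq]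
    exact (hM j b).symm

namespace SB

open MonoidHom (piCoprod piRestrict piRestrict_mulSingle_of_mem piRestrict_mulSingle_of_notMem)

section FaceSubgroup

variable {n : ℕ} {A : Fin n → Type} [∀ j, CommGroup (A j)] {G : Fin (2 * n) → Type}
  [∀ i, Group (G i)] (Y : ∀ i, Set (G i)) (s : ∀ (j : Fin n) (i : Fin (2 * n)), A j →* G i)
  (I : Finset (Fin (2 * n))) (κ : Fin n → Fin (2 * n)) (c : ∀ i : I, G i.1 →* ∀ j, A j)

def faceGens : Set (∀ k, G k) :=
  ⋃ i ∈ I, (Ybar Y i ∪ ⋃ m, Zbar s m i (κ m))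

def faceLocus : Subgroup (∀ k, G k) :=
  (⨅ m, (Pi.evalMonoidHom G (κ m)).eqLocus ((s m (κ m)).comp
      ((Pi.evalMonoidHom A m).comp ((piCoprod c).comp (piRestrict G I))⁻¹))) ⊓
    ⨅ (k) (_ : k ∉ I) (_ : k ∉ Set.range κ), (Pi.evalMonoidHom G k).ker

variable {Y s I κ c}

theorem faceGens_subset_faceLocus (hκ : Injective κ) (hκI : ∀ m, κ m ∉ I)
    (hcY : ∀ i : I, ∀ y ∈ Y i, c i y = 1) (hcs : ∀ (i : I) j b, c i (s j i b) = Pi.mulSingle j b) :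
    faceGens Y s I κ ⊆ faceLocus s I κ c := by
  intro x hx
  simp only [faceGens, Set.mem_iUnion, Set.mem_union, Ybar, Zbar, Set.mem_image,
    Set.mem_range] at hx
  obtain ⟨i, hi, hx⟩ := hx
  have hκi (m : Fin n) : κ m ≠ i := fun h => hκI m (h ▸ hi)
  have hcoprod (x : G i) : piCoprod c (piRestrict G I (Pi.mulSingle i x)) = c ⟨i, hi⟩ x := by
    rw [piRestrict_mulSingle_of_mem hi]
    exact MonoidHom.piCoprod_mulSingle _ _ _
  simp only [faceLocus, SetLike.mem_coe, mem_inf, mem_iInf, MonoidHom.mem_ker]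
  rcases hx with ⟨y, hy, rfl⟩ | ⟨m', b, rfl⟩
  · refine ⟨fun m => ?_, fun k hkI _ => ?_⟩ <;> change Pi.mulSingle i y _ = _
    · simp [Pi.mulSingle_eq_of_ne (hκi m), hcoprod, hcY ⟨i, hi⟩ y hy]
    · simp [Pi.mulSingle_eq_of_ne (fun h : k = i => hkI (h ▸ hi))]
  · refine ⟨fun m => ?_, fun k hkI hkκ => ?_⟩ <;> change (_ * _ : ∀ k, G k) _ = _
    · have hcontent : piCoprod c (piRestrict G I
          (Pi.mulSingle i (s m' i b) * Pi.mulSingle (κ m') (s m' (κ m') b⁻¹))) =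
            Pi.mulSingle m' b := by
        rw [map_mul, map_mul, hcoprod, hcs, piRestrict_mulSingle_of_notMem (hκI m'), map_one,
          mul_one]
      simp only [Pi.mul_apply, Pi.mulSingle_eq_of_ne (hκi m), one_mul, MonoidHom.comp_apply,
        MonoidHom.inv_apply, hcontent]
      by_cases hm : m = m'
      · subst hm
        simp
      · simp [Pi.mulSingle_eq_of_ne hm, Pi.mulSingle_eq_of_ne (hκ.ne hm)]
    · simp [Pi.mulSingle_eq_of_ne (fun h : k = i => hkI (h ▸ hi)),
        Pi.mulSingle_eq_of_ne (fun h => hkκ ⟨m', h.symm⟩)]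

theorem eq_one_of_mem_faceLocus {x : ∀ k, G k} (hx : x ∈ faceLocus s I κ c)
    (h1 : piRestrict G I x = 1) : x = 1 := by
  obtain ⟨hκx, hout⟩ := mem_inf.1 hx
  funext k
  by_cases hkI : k ∈ I
  · exact congrFun h1 ⟨k, hkI⟩
  by_cases hkκ : k ∈ Set.range κ
  · obtain ⟨m, rfl⟩ := hkκ
    have : x (κ m) = _ := (mem_iInf.1 hκx m :)
    simp [this, h1]
  · exact mem_iInf.1 (mem_iInf.1 (mem_iInf.1 hout k) hkI) hkκ

theorem map_piRestrict_closure_faceGens (hκI : ∀ m, κ m ∉ I)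
    (hgen : ∀ i : I, closure (Y i ∪ ⋃ j, Set.range (s j i)) = ⊤) :
    (closure (faceGens Y s I κ)).map (piRestrict G I) = ⊤ := by
  refine eq_top_iff.2 fun g _ => pi_mem_of_mulSingle_mem g fun i => ?_
  have hle : closure (Y i ∪ ⋃ j, Set.range (s j i)) ≤
      ((closure (faceGens Y s I κ)).map (piRestrict G I)).comap (MonoidHom.mulSingle _ i) := by
    rw [closure_le]
    rintro t (hy | ht)
    · exact ⟨Pi.mulSingle i.1 t, subset_closure (Set.mem_biUnion i.2 (Or.inl ⟨t, hy, rfl⟩)),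
        piRestrict_mulSingle_of_mem i.2 t⟩
    · obtain ⟨j, b, rfl⟩ := Set.mem_iUnion.1 ht
      refine ⟨_, subset_closure (Set.mem_biUnion i.2 (Or.inr (Set.mem_iUnion.2 ⟨j, b, rfl⟩))), ?_⟩
      rw [map_mul, piRestrict_mulSingle_of_mem i.2, piRestrict_mulSingle_of_notMem (hκI j),
        mul_one]
      rfl
  exact hle (hgen i ▸ mem_top (g i))

theorem nonempty_closure_faceGens_mulEquiv (hκ : Injective κ) (hκI : ∀ m, κ m ∉ I)
    (hcY : ∀ i : I, ∀ y ∈ Y i, c i y = 1) (hcs : ∀ (i : I) j b, c i (s j i b) = Pi.mulSingle j b)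
    (hgen : ∀ i : I, closure (Y i ∪ ⋃ j, Set.range (s j i)) = ⊤) :
    Nonempty (closure (faceGens Y s I κ) ≃* ∀ i : I, G i.1) := by
  let π := (piRestrict G I).domRestrict (closure (faceGens Y s I κ))
  have hinj : Injective π := by
    refine (injective_iff_map_eq_one π).2 fun ⟨x, hx⟩ h1 => Subtype.ext ?_
    have hloc := (closure_le _).2 (faceGens_subset_faceLocus hκ hκI hcY hcs) hx
    exact eq_one_of_mem_faceLocus hloc h1
  have hsurj : Surjective π := by
    rw [← MonoidHom.range_eq_top, MonoidHom.domRestrict_range]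
    exact map_piRestrict_closure_faceGens hκI hgen
  exact ⟨MulEquiv.ofBijective π ⟨hinj, hsurj⟩⟩

end FaceSubgroup

section LabelSequences

variable {n : ℕ}

theorem mem_alphaF {p : ℕ} {x : Fin (2 * n)} :
    x ∈ alphaF n p ↔ cc n p ≤ x.val ∧ x.val < cc n (p + 1) := by
  simp [alphaF]

theorem cc_zero : cc n 0 = 0 := by simp [cc]

theorem cc_one : cc n 1 = (n + 2) / 3 := by simp [cc]

theorem cc_two : cc n 2 = (2 * n + 2) / 3 := by simp [cc]

theorem cc_three : cc n 3 = n := by simp [cc]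

theorem cc_four : cc n 4 = n + (n + 2) / 3 := by simp [cc]

theorem mem_alphaF_zero {x : Fin (2 * n)} : x ∈ alphaF n 0 ↔ x.val < (n + 2) / 3 := by
  simp [mem_alphaF, cc_zero, cc_one]

theorem mem_alphaF_one_union_two {x : Fin (2 * n)} :
    x ∈ alphaF n 1 ∪ alphaF n 2 ↔ (n + 2) / 3 ≤ x.val ∧ x.val < n := by
  simp only [Finset.mem_union, mem_alphaF, Nat.reduceAdd, cc_one, cc_two, cc_three]
  omega

theorem mem_alphaF_zero_union_three {x : Fin (2 * n)} :
    x ∈ alphaF n 0 ∪ alphaF n 3 ↔ x.val < (n + 2) / 3 ∨ n ≤ x.val ∧ x.val < n + (n + 2) / 3 := by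
  simp only [Finset.mem_union, mem_alphaF, Nat.reduceAdd, cc_zero, cc_one, cc_three, cc_four]
  omega

/-- The coordinate paired with the label `m` in the generators `Z̄`: `m` itself for `m ∈ α₂₃`,
and `m + |α₁₂₃₄|` for `m ∈ α₁`. -/
def partner (hn : 2 ≤ n) (m : Fin n) : Fin (2 * n) :=
  ⟨if m.val < (n + 2) / 3 then m.val + n + (n + 2) / 3 else m.val, by split <;> omega⟩

theorem partner_injective (hn : 2 ≤ n) : Injective (partner hn) := by
  intro m m' h
  have := congrArg Fin.val h
  simp only [partner] at this
  ext
  split_ifs at this <;> omega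

theorem partner_notMem (hn : 2 ≤ n) (m : Fin n) : partner hn m ∉ alphaF n 0 ∪ alphaF n 3 := by
  have := m.isLt
  rw [mem_alphaF_zero_union_three, partner]
  split_ifs <;> dsimp only <;> omega

theorem partner_idxN (hn : 2 ≤ n) {j : Fin (2 * n)} (hj : j.val < n) :
    partner hn (idxN (by omega) j.val) =
      if j.val < (n + 2) / 3 then idx (by omega) (j.val + (n + cc n 1)) else j := by
  ext
  simp only [partner, idxN, Nat.mod_eq_of_lt hj]
  split_ifs with hlt
  · simp only [idx, cc_one]
    rw [Nat.mod_eq_of_lt (by omega)]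
    omega
  · rfl

theorem iUnion_alphaF_eq_iUnion_partner (hn : 2 ≤ n) {X : Type*}
    (F : Fin n → Fin (2 * n) → Set X) :
    (⋃ j ∈ alphaF n 1 ∪ alphaF n 2, F (idxN (by omega) j.val) j) ∪
        ⋃ j ∈ alphaF n 0, F (idxN (by omega) j.val) (idx (by omega) (j.val + (n + cc n 1))) =
      ⋃ m, F m (partner hn m) := by
  ext x
  simp only [Set.mem_union, Set.mem_iUnion]
  constructor
  · rintro (⟨j, hj, hx⟩ | ⟨j, hj, hx⟩)
    · rw [mem_alphaF_one_union_two] at hj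
      refine ⟨idxN (by omega) j.val, ?_⟩
      rwa [partner_idxN hn hj.2, if_neg (by omega)]
    · rw [mem_alphaF_zero] at hj
      refine ⟨idxN (by omega) j.val, ?_⟩
      rwa [partner_idxN hn (by omega), if_pos hj]
  · rintro ⟨m, hx⟩
    let j : Fin (2 * n) := ⟨m.val, by omega⟩
    have hjm : idxN (by omega) j.val = m := Fin.ext (Nat.mod_eq_of_lt m.isLt)
    have hpj := partner_idxN hn (j := j) m.isLt
    rw [hjm] at hpj
    by_cases hm : m.val < (n + 2) / 3
    · rw [if_pos hm] at hpj
      exact Or.inr ⟨j, mem_alphaF_zero.2 hm, by rwa [hjm, ← hpj]⟩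
    · rw [if_neg hm] at hpj
      exact Or.inl ⟨j, mem_alphaF_one_union_two.2 ⟨not_lt.1 hm, m.isLt⟩, by rwa [hjm, ← hpj]⟩

end LabelSequences

theorem stmt_6
    (n : ℕ) (hn : 3 ≤ n)
    (A : Fin n → Type) [∀ j, CommGroup (A j)]
    [∀ j, Module.Finite ℤ (Additive (A j))]
    (G : Fin (2 * n) → Type) [∀ i, Group (G i)]
    (φ : ∀ i, G i →* (∀ j, A j)) (hφ : ∀ i, Function.Surjective (φ i))
    (s : ∀ (j : Fin n) (i : Fin (2 * n)), A j →* G i)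
    (Y : ∀ i, Set (G i))
    (hYker : ∀ i, ∀ y ∈ Y i, φ i y = 1)
    (hYgen : ∀ i, Subgroup.closure (Y i ∪ ⋃ j, Set.range (s j i)) = ⊤)
    :
    Nonempty
      (↥(Subgroup.closure (⋃ i ∈ (alphaF n 0 ∪ alphaF n 3),
            (Ybar Y i
              ∪ (⋃ j ∈ alphaF n 1 ∪ alphaF n 2, Zbar s (idxN (by omega : 0 < n) j.val) i j)
              ∪ ⋃ j ∈ alphaF n 0,
                  Zbar s (idxN (by omega : 0 < n) j.val) i
                    (idx (by omega : 0 < n) (j.val + (n + cc n 1))))))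
        ≃* (∀ i : ↥(alphaF n 0 ∪ alphaF n 3), G i.1)) := by
  have hn2 : 2 ≤ n := by omega
  choose c hcY hcs using fun i =>
    exists_monoidHom_eq_one_and_map_eq_mulSingle (hφ i) (fun j => s j i) (hYker i) (hYgen i)
  obtain ⟨e⟩ := nonempty_closure_faceGens_mulEquiv (c := fun i => c i.1) (partner_injective hn2)
    (partner_notMem hn2) (fun i => hcY i) (fun i => hcs i) (fun i => hYgen i)
  refine ⟨(MulEquiv.subgroupCongr
    (congrArg Subgroup.closure (Set.iUnion₂_congr fun i _ => ?_))).trans e⟩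
  rw [Set.union_assoc, iUnion_alphaF_eq_iUnion_partner hn2 (fun m k => Zbar s m i k)]

end SB
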